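/- Let Y ∈ ℝ^{n×q}, X = [X₁, …, X_K] with X_k ∈ ℝ^{n×p_k}, λ > 0, t > 0 and w_k > 0. Suppose B̂ ∈ ℝ^{p×q} (with row-blocks B̂_k ∈ ℝ^{p_k×q}) is a global minimizer of the composite nuclear norm penalized least squares objective B ↦ (1/(2nq))‖Y − XB‖_F² + λt Σ_{k=1}^K w_k ‖B_k‖_*. Then for every k = 1, …, K, d₁(X_kᵀ(Y − XB̂)) ≤ λ t n q w_k. -/

import Mathlib

/-
The nuclear norm is dual to the operator norm: `⟪U, B⟫ ≤ ‖B‖_*` whenever `d₁(U) ≤ 1`, with equality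
for the polar factor `U` of `B` (read off an eigendecomposition of `BᵀB`). Evaluating the dual
certificate of `B + s u vᵀ` gives `‖B + s u vᵀ‖_* ≤ ‖B‖_* + s ‖u‖ ‖v‖`. Comparing the objective at `B̂`
with the competitor whose `k`-th block is `B̂ₖ + s u vᵀ` and letting `s → 0⁺` yields
`uᵀ Xₖᵀ (Y - X B̂) v ≤ λ t n q wₖ ‖u‖ ‖v‖` for all `u, v`, which is the operator norm bound.
-/

open Matrix

noncomputable def frobInner {m n : ℕ} (A B : Matrix (Fin m) (Fin n) ℝ) : ℝ := (Aᵀ * B).trace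

noncomputable def frobNorm {m n : ℕ} (A : Matrix (Fin m) (Fin n) ℝ) : ℝ := Real.sqrt (Aᵀ * A).trace

noncomputable def nucNorm {m n : ℕ} (A : Matrix (Fin m) (Fin n) ℝ) : ℝ :=
  ((Matrix.posSemidef_conjTranspose_mul_self A).1.eigenvectorUnitary.1 *
    diagonal ((RCLike.ofReal : ℝ → ℝ) ∘ (√·) ∘ (Matrix.posSemidef_conjTranspose_mul_self A).1.eigenvalues) *
    (star (Matrix.posSemidef_conjTranspose_mul_self A).1.eigenvectorUnitary : Matrix (Fin n) (Fin n) ℝ)).trace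

noncomputable def opNorm {m n : ℕ} (A : Matrix (Fin m) (Fin n) ℝ) : ℝ :=
  ‖LinearMap.toContinuousLinearMap (Matrix.toEuclideanLin A)‖

open WithLp

section EuclideanNorm

variable {m n : ℕ}

lemma norm_toLp_sq (x : Fin n → ℝ) : ‖toLp 2 x‖ ^ 2 = x ⬝ᵥ x := by
  rw [← real_inner_self_eq_norm_sq, EuclideanSpace.inner_toLp_toLp, star_trivial]

lemma dotProduct_le_norm_mul_norm (x y : Fin n → ℝ) : x ⬝ᵥ y ≤ ‖toLp 2 x‖ * ‖toLp 2 y‖ := by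
  simpa [EuclideanSpace.inner_toLp_toLp, dotProduct_comm] using
    real_inner_le_norm (toLp 2 x) (toLp 2 y)

lemma norm_mulVec_le_opNorm_mul (A : Matrix (Fin m) (Fin n) ℝ) (x : Fin n → ℝ) :
    ‖toLp 2 (A *ᵥ x)‖ ≤ opNorm A * ‖toLp 2 x‖ :=
  (LinearMap.toContinuousLinearMap (toEuclideanLin A)).le_opNorm (toLp 2 x)

lemma opNorm_le_of_norm_mulVec_le {A : Matrix (Fin m) (Fin n) ℝ} {c : ℝ} (hc : 0 ≤ c)
    (h : ∀ x, ‖toLp 2 (A *ᵥ x)‖ ≤ c * ‖toLp 2 x‖) : opNorm A ≤ c :=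
  ContinuousLinearMap.opNorm_le_bound _ hc fun x => h x.ofLp

lemma opNorm_le_of_dotProduct_mulVec_le {A : Matrix (Fin m) (Fin n) ℝ} {c : ℝ} (hc : 0 ≤ c)
    (h : ∀ u v, u ⬝ᵥ (A *ᵥ v) ≤ c * (‖toLp 2 u‖ * ‖toLp 2 v‖)) : opNorm A ≤ c := by
  refine opNorm_le_of_norm_mulVec_le hc fun x => ?_
  have hx := h (A *ᵥ x) x
  rw [← norm_toLp_sq, sq, mul_left_comm] at hx
  rcases (norm_nonneg (toLp 2 (A *ᵥ x))).eq_or_lt with h0 | hpos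
  · rw [← h0]; positivity
  · exact le_of_mul_le_mul_left hx hpos

end EuclideanNorm

section Frobenius

variable {m n l : ℕ}

lemma frobInner_eq_sum_dotProduct (U B : Matrix (Fin m) (Fin n) ℝ) :
    frobInner U B = ∑ i, Uᵀ i ⬝ᵥ Bᵀ i := by
  simp only [frobInner, trace, diag, mul_apply']
  rfl

lemma frobInner_mul_of_mul_transpose_eq_one {U B : Matrix (Fin m) (Fin n) ℝ}
    {Q : Matrix (Fin n) (Fin n) ℝ} (hQ : Q * Qᵀ = 1) :
    frobInner (U * Q) (B * Q) = frobInner U B := by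
  rw [frobInner, frobInner, transpose_mul, Matrix.mul_assoc, trace_mul_comm, Matrix.mul_assoc,
    Matrix.mul_assoc, hQ, Matrix.mul_one]

lemma frobInner_add_right (U A C : Matrix (Fin m) (Fin n) ℝ) :
    frobInner U (A + C) = frobInner U A + frobInner U C := by
  rw [frobInner, frobInner, frobInner, Matrix.mul_add, trace_add]

lemma frobInner_smul_right (U A : Matrix (Fin m) (Fin n) ℝ) (s : ℝ) :
    frobInner U (s • A) = s * frobInner U A := by
  rw [frobInner, frobInner, Matrix.mul_smul, trace_smul, smul_eq_mul]

lemma frobInner_comm (A B : Matrix (Fin m) (Fin n) ℝ) : frobInner A B = frobInner B A := by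
  rw [frobInner, frobInner, ← trace_transpose, transpose_mul, transpose_transpose]

lemma frobInner_mul_right (R : Matrix (Fin m) (Fin n) ℝ) (A : Matrix (Fin m) (Fin l) ℝ)
    (D : Matrix (Fin l) (Fin n) ℝ) : frobInner R (A * D) = frobInner (Aᵀ * R) D := by
  rw [frobInner, frobInner, transpose_mul, transpose_transpose, Matrix.mul_assoc]

lemma frobInner_vecMulVec (U : Matrix (Fin m) (Fin n) ℝ) (u : Fin m → ℝ) (v : Fin n → ℝ) :
    frobInner U (vecMulVec u v) = u ⬝ᵥ (U *ᵥ v) := by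
  simp only [frobInner_eq_sum_dotProduct, dotProduct, mulVec, transpose_apply, vecMulVec_apply,
    Finset.mul_sum]
  rw [Finset.sum_comm]
  exact Finset.sum_congr rfl fun i _ => Finset.sum_congr rfl fun j _ => by ring

lemma frobNorm_sq (A : Matrix (Fin m) (Fin n) ℝ) : frobNorm A ^ 2 = frobInner A A :=
  Real.sq_sqrt (posSemidef_conjTranspose_mul_self A).trace_nonneg

lemma frobNorm_sub_smul_sq (R W : Matrix (Fin m) (Fin n) ℝ) (s : ℝ) :
    frobNorm (R - s • W) ^ 2 = frobNorm R ^ 2 - 2 * s * frobInner R W + s ^ 2 * frobNorm W ^ 2 := by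
  simp only [frobNorm_sq, frobInner, transpose_sub, transpose_smul, Matrix.sub_mul,
    Matrix.mul_sub, Matrix.smul_mul, Matrix.mul_smul, trace_sub, trace_smul, smul_eq_mul]
  rw [show (Wᵀ * R).trace = (Rᵀ * W).trace from frobInner_comm W R]
  ring

end Frobenius

section NuclearNorm

variable {m n : ℕ}

lemma exists_orthogonal_nucNorm_eq_sum (B : Matrix (Fin m) (Fin n) ℝ) :
    ∃ (Q : Matrix (Fin n) (Fin n) ℝ) (σ : Fin n → ℝ), Qᵀ * Q = 1 ∧ Q * Qᵀ = 1 ∧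
      (∀ i, 0 ≤ σ i) ∧ (B * Q)ᵀ * (B * Q) = diagonal (σ ^ 2) ∧ nucNorm B = ∑ i, σ i := by
  have hpsd := posSemidef_conjTranspose_mul_self B
  set Q : Matrix (Fin n) (Fin n) ℝ := (hpsd.1.eigenvectorUnitary : Matrix (Fin n) (Fin n) ℝ)
  have hstar : star Q = Qᵀ := conjTranspose_eq_transpose_of_trivial Q
  have hQQ : Q * Qᵀ = 1 := hstar ▸ mem_unitaryGroup_iff.mp hpsd.1.eigenvectorUnitary.2
  have hQtQ : Qᵀ * Q = 1 := hstar ▸ mem_unitaryGroup_iff'.mp hpsd.1.eigenvectorUnitary.2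
  have hspec : Bᵀ * B = Q * diagonal hpsd.1.eigenvalues * Qᵀ := by
    have h := hpsd.1.spectral_theorem
    rw [Unitary.conjStarAlgAut_apply, RCLike.ofReal_real_eq_id, Function.id_comp] at h
    rw [← conjTranspose_eq_transpose_of_trivial, ← hstar]
    exact h
  refine ⟨Q, fun i => √(hpsd.1.eigenvalues i), hQtQ, hQQ, fun i => Real.sqrt_nonneg _, ?_, ?_⟩
  · have hsq : (fun i => √(hpsd.1.eigenvalues i)) ^ 2 = hpsd.1.eigenvalues :=
      funext fun i => Real.sq_sqrt (hpsd.eigenvalues_nonneg i)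
    rw [hsq, transpose_mul, Matrix.mul_assoc, ← Matrix.mul_assoc Bᵀ, hspec]
    simp only [← Matrix.mul_assoc, hQtQ, Matrix.one_mul]
    rw [Matrix.mul_assoc, hQtQ, Matrix.mul_one]
  · change (Q * diagonal (RCLike.ofReal ∘ (√·) ∘ hpsd.1.eigenvalues) * star Q).trace = _
    rw [hstar, trace_mul_cycle, hQtQ, Matrix.one_mul, trace_diagonal]
    rfl

lemma norm_mulVec_sq (A : Matrix (Fin m) (Fin n) ℝ) (x : Fin n → ℝ) :
    ‖toLp 2 (A *ᵥ x)‖ ^ 2 = x ⬝ᵥ ((Aᵀ * A) *ᵥ x) := by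
  rw [norm_toLp_sq, dotProduct_mulVec, dotProduct_mulVec, ← vecMul_vecMul, vecMul_transpose]

lemma norm_col_sq (A : Matrix (Fin m) (Fin n) ℝ) (i : Fin n) :
    ‖toLp 2 (Aᵀ i)‖ ^ 2 = (Aᵀ * A) i i := by
  rw [norm_toLp_sq, mul_apply']
  rfl

lemma norm_mulVec_le_of_opNorm_le_one {U : Matrix (Fin m) (Fin n) ℝ} (hU : opNorm U ≤ 1)
    (x : Fin n → ℝ) : ‖toLp 2 (U *ᵥ x)‖ ≤ ‖toLp 2 x‖ :=
  (norm_mulVec_le_opNorm_mul U x).trans (mul_le_of_le_one_left (norm_nonneg _) hU)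

lemma norm_mulVec_le_of_transpose_mul_self_eq_diagonal {A : Matrix (Fin m) (Fin n) ℝ}
    {e : Fin n → ℝ} (hA : Aᵀ * A = diagonal e) (he : ∀ i, e i ≤ 1) (x : Fin n → ℝ) :
    ‖toLp 2 (A *ᵥ x)‖ ≤ ‖toLp 2 x‖ := by
  rw [← pow_le_pow_iff_left₀ (norm_nonneg _) (norm_nonneg _) two_ne_zero, norm_mulVec_sq,
    norm_toLp_sq, hA]
  simp only [dotProduct, mulVec_diagonal]
  exact Finset.sum_le_sum fun i _ => by nlinarith [he i, mul_self_nonneg (x i)]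

lemma frobInner_le_nucNorm {U : Matrix (Fin m) (Fin n) ℝ} (hU : opNorm U ≤ 1)
    (B : Matrix (Fin m) (Fin n) ℝ) : frobInner U B ≤ nucNorm B := by
  obtain ⟨Q, σ, hQtQ, hQQ, hσ, hBQ, hnuc⟩ := exists_orthogonal_nucNorm_eq_sum B
  have hBQ_col : ∀ i, ‖toLp 2 ((B * Q)ᵀ i)‖ = σ i := fun i => by
    rw [← pow_left_inj₀ (norm_nonneg _) (hσ i) two_ne_zero, norm_col_sq, hBQ, diagonal_apply_eq,
      Pi.pow_apply]
  have hQ_col : ∀ i, ‖toLp 2 (Qᵀ i)‖ = 1 := fun i => by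
    rw [← pow_left_inj₀ (norm_nonneg _) zero_le_one two_ne_zero, norm_col_sq, hQtQ,
      one_apply_eq, one_pow]
  rw [hnuc, ← frobInner_mul_of_mul_transpose_eq_one hQQ, frobInner_eq_sum_dotProduct]
  refine Finset.sum_le_sum fun i _ => ?_
  calc (U * Q)ᵀ i ⬝ᵥ (B * Q)ᵀ i ≤ ‖toLp 2 (U *ᵥ Qᵀ i)‖ * ‖toLp 2 ((B * Q)ᵀ i)‖ :=
        dotProduct_le_norm_mul_norm _ _
    _ ≤ ‖toLp 2 (Qᵀ i)‖ * σ i := by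
        rw [hBQ_col]
        exact mul_le_mul_of_nonneg_right (norm_mulVec_le_of_opNorm_le_one hU _) (hσ i)
    _ = σ i := by rw [hQ_col, one_mul]

lemma exists_opNorm_le_one_frobInner_eq_nucNorm (B : Matrix (Fin m) (Fin n) ℝ) :
    ∃ U : Matrix (Fin m) (Fin n) ℝ, opNorm U ≤ 1 ∧ frobInner U B = nucNorm B := by
  obtain ⟨Q, σ, hQtQ, hQQ, hσ, hBQ, hnuc⟩ := exists_orthogonal_nucNorm_eq_sum B
  -- `P * Qᵀ` is the polar factor of `B`; since `0⁻¹ = 0`, columns of `B * Q` with `σ i = 0` are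
  -- sent to `0` instead of being normalized.
  set P := B * Q * diagonal σ⁻¹
  have hP : Pᵀ * P = diagonal fun i => (σ i * (σ i)⁻¹) ^ 2 := by
    rw [transpose_mul, diagonal_transpose, Matrix.mul_assoc, ← Matrix.mul_assoc (B * Q)ᵀ, hBQ,
      diagonal_mul_diagonal', diagonal_mul_diagonal']
    congr 1
    funext i
    simp only [Pi.pow_apply, Pi.inv_apply]
    ring
  refine ⟨P * Qᵀ, opNorm_le_of_norm_mulVec_le zero_le_one fun x => ?_, ?_⟩
  · have hQt : (Qᵀ)ᵀ * Qᵀ = diagonal 1 := by rw [transpose_transpose, hQQ, ← diagonal_one]; rfl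
    rw [one_mul, ← mulVec_mulVec]
    refine (norm_mulVec_le_of_transpose_mul_self_eq_diagonal hP (fun i => ?_) _).trans
      (norm_mulVec_le_of_transpose_mul_self_eq_diagonal hQt (fun _ => le_rfl) x)
    rcases eq_or_ne (σ i) 0 with h | h
    · simp [h]
    · rw [mul_inv_cancel₀ h, one_pow]
  · rw [← frobInner_mul_of_mul_transpose_eq_one hQQ, Matrix.mul_assoc, hQtQ, Matrix.mul_one,
      frobInner, transpose_mul, diagonal_transpose, Matrix.mul_assoc, hBQ, diagonal_mul_diagonal',
      trace_diagonal, hnuc]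
    refine Finset.sum_congr rfl fun i _ => ?_
    rcases eq_or_ne (σ i) 0 with h | h
    · simp [h]
    · simp [h, sq]

lemma nucNorm_add_smul_vecMulVec_le (A : Matrix (Fin m) (Fin n) ℝ) (u : Fin m → ℝ)
    (v : Fin n → ℝ) {s : ℝ} (hs : 0 ≤ s) :
    nucNorm (A + s • vecMulVec u v) ≤ nucNorm A + s * (‖toLp 2 u‖ * ‖toLp 2 v‖) := by
  obtain ⟨U, hU, hUB⟩ := exists_opNorm_le_one_frobInner_eq_nucNorm (A + s • vecMulVec u v)
  have hrank_one : frobInner U (vecMulVec u v) ≤ ‖toLp 2 u‖ * ‖toLp 2 v‖ := by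
    rw [frobInner_vecMulVec]
    exact (dotProduct_le_norm_mul_norm _ _).trans
      (mul_le_mul_of_nonneg_left (norm_mulVec_le_of_opNorm_le_one hU v) (norm_nonneg _))
  rw [← hUB, frobInner_add_right, frobInner_smul_right]
  exact add_le_add (frobInner_le_nucNorm hU A) (mul_le_mul_of_nonneg_left hrank_one hs)

end NuclearNorm

lemma Fintype.sum_update_eq_add_sub {ι M : Type*} [Fintype ι] [DecidableEq ι] {β : ι → Type*}
    [AddCommGroup M] (f : ∀ i, β i → M) (x : ∀ i, β i) (k : ι) (b : β k) :
    ∑ j, f j (Function.update x k b j) = ∑ j, f j (x j) + (f k b - f k (x k)) := by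
  rw [← Finset.add_sum_erase _ _ (Finset.mem_univ k), ← Finset.add_sum_erase _ _ (Finset.mem_univ k),
    Function.update_self, Finset.sum_congr rfl fun j hj =>
      by rw [Function.update_of_ne (Finset.ne_of_mem_erase hj)]]
  abel

open Filter Topology in
lemma le_of_forall_pos_mul_le_sq_mul_add {T A C : ℝ}
    (h : ∀ s, 0 < s → s * T ≤ s ^ 2 * A + s * C) : T ≤ C := by
  have hlim : Tendsto (fun s => s * A + C) (𝓝[>] 0) (𝓝 C) := by
    have := (by fun_prop : Continuous fun s : ℝ => s * A + C).tendsto 0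
    simpa using this.mono_left nhdsWithin_le_nhds
  refine ge_of_tendsto hlim (eventually_nhdsWithin_of_forall fun s (hs : 0 < s) => ?_)
  have := h s hs
  rw [sq, mul_assoc, ← mul_add] at this
  exact le_of_mul_le_mul_left this hs

/-- KKT consequence of composite nuclear norm penalization: if `B̂` globally minimizes
`B ↦ (1/(2nq))‖Y - ∑ₖ Xₖ Bₖ‖_F² + λt ∑ₖ wₖ ‖Bₖ‖_*`, then for every `k`,
`d₁(Xₖᵀ(Y - X B̂)) ≤ λ t n q wₖ`. -/
theorem stmt_4 (n q K : ℕ) (hn : 0 < n) (hq : 0 < q) (p : Fin K → ℕ)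
    (Y : Matrix (Fin n) (Fin q) ℝ)
    (X : ∀ k, Matrix (Fin n) (Fin (p k)) ℝ)
    (lam t : ℝ) (w : Fin K → ℝ) (hlam : 0 < lam) (ht : 0 < t) (hw : ∀ k, 0 < w k)
    (Bhat : ∀ k, Matrix (Fin (p k)) (Fin q) ℝ)
    (hmin : ∀ B : ∀ k, Matrix (Fin (p k)) (Fin q) ℝ,
      (1 / (2 * n * q)) * (frobNorm (Y - ∑ k, X k * Bhat k)) ^ 2 +
          lam * t * ∑ k, w k * nucNorm (Bhat k) ≤
        (1 / (2 * n * q)) * (frobNorm (Y - ∑ k, X k * B k)) ^ 2 +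
          lam * t * ∑ k, w k * nucNorm (B k)) :
    ∀ k, opNorm ((X k)ᵀ * (Y - ∑ j, X j * Bhat j)) ≤ lam * t * n * q * w k := by
  intro k
  set R := Y - ∑ j, X j * Bhat j
  have hwk := hw k
  refine opNorm_le_of_dotProduct_mulVec_le (by positivity) fun u v => ?_
  set a : ℝ := 1 / (2 * n * q)
  set G := ‖toLp 2 u‖ * ‖toLp 2 v‖
  set W := X k * vecMulVec u v
  have hfirst_order : ∀ s, 0 < s →
      s * (2 * a * frobInner R W) ≤ s ^ 2 * (a * frobNorm W ^ 2) + s * (lam * t * w k * G) := by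
    intro s hs
    have hopt := hmin (Function.update Bhat k (Bhat k + s • vecMulVec u v))
    rw [Fintype.sum_update_eq_add_sub (fun j B => X j * B),
      Fintype.sum_update_eq_add_sub (fun j B => w j * nucNorm B)] at hopt
    have hres : Y - (∑ j, X j * Bhat j + (X k * (Bhat k + s • vecMulVec u v) - X k * Bhat k)) =
        R - s • W := by
      rw [Matrix.mul_add, Matrix.mul_smul, add_sub_cancel_left, sub_add_eq_sub_sub]
    rw [hres, frobNorm_sub_smul_sq] at hopt
    have hnuc := mul_le_mul_of_nonneg_left (nucNorm_add_smul_vecMulVec_le (Bhat k) u v hs.le)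
      (by positivity : 0 ≤ lam * t * w k)
    linarith
  have hbound := le_of_forall_pos_mul_le_sq_mul_add hfirst_order
  rw [frobInner_mul_right, frobInner_vecMulVec] at hbound
  have ha : 2 * a = 1 / (n * q) := by simp only [a]; field_simp
  rw [ha, one_div, inv_mul_le_iff₀ (by positivity)] at hbound
  linarith
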